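/- Assume char K = 2. Let ε be a plane external to the Klein quadric H₅ such that ε ∩ π₅(ε) is a point q (a 1-dimensional subspace). Then for every line G with G ≤ ε one has: G ≤ π₅(G) if and only if q ≤ G (i.e. G belongs to the pencil L[q,ε]); and G ∩ π₅(G) = 0 if and only if q is not contained in G. -/

import Mathlib

/-- The Klein quadratic form on `K^6`. -/
def kleinQ {K : Type*} [Field K] (x : Fin 6 → K) : K :=
  x 0 * x 1 + x 2 * x 3 + x 4 * x 5

/-- The polar bilinear form `B(x,y) = Q(x+y) - Q(x) - Q(y)`. -/
def kleinB {K : Type*} [Field K] (x y : Fin 6 → K) : K :=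
  kleinQ (x + y) - kleinQ x - kleinQ y

/-- The polar subspace `π₅(S)` of a subspace `S`. -/
def kleinPolar {K : Type*} [Field K] (S : Submodule K (Fin 6 → K)) :
    Submodule K (Fin 6 → K) where
  carrier := {y | ∀ s ∈ S, kleinB s y = 0}
  add_mem' := by
    intro a b ha hb s hs
    have h1 := ha s hs
    have h2 := hb s hs
    simp only [kleinB, kleinQ, Pi.add_apply] at *
    linear_combination h1 + h2
  zero_mem' := by
    intro s hs
    simp [kleinB, kleinQ]
  smul_mem' := by
    intro c a ha s hs
    have h1 := ha s hs
    simp only [kleinB, kleinQ, Pi.add_apply, Pi.smul_apply, smul_eq_mul] at *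
    linear_combination c * h1

/-- `τ` is a tangent hyperplane of the Klein quadric. -/
def IsTangentHyperplane {K : Type*} [Field K] (τ : Submodule K (Fin 6 → K)) : Prop :=
  ∃ x : Fin 6 → K, x ≠ 0 ∧ kleinQ x = 0 ∧ τ = kleinPolar (Submodule.span K {x})

/-- A subspace is external to the Klein quadric. -/
def IsExternal {K : Type*} [Field K] (S : Submodule K (Fin 6 → K)) : Prop :=
  ∀ s ∈ S, s ≠ 0 → kleinQ s ≠ 0

/-- A `0`-secant of the Klein quadric: an external line. -/
def IsSecant {K : Type*} [Field K] (G : Submodule K (Fin 6 → K)) : Prop :=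
  Module.finrank K G = 2 ∧ IsExternal G

/-- The pencil of lines with vertex `v` and carrier plane `κ`. -/
def pencil {K : Type*} [Field K] (v κ : Submodule K (Fin 6 → K)) :
    Set (Submodule K (Fin 6 → K)) :=
  {X | Module.finrank K X = 2 ∧ v ≤ X ∧ X ≤ κ}

/-- An hfd line set: a set of `0`-secants such that every tangent hyperplane
contains exactly one member. -/
def IsHfd {K : Type*} [Field K] (H : Set (Submodule K (Fin 6 → K))) : Prop :=
  (∀ G ∈ H, IsSecant G) ∧
    ∀ τ : Submodule K (Fin 6 → K), IsTangentHyperplane τ → ∃! G, G ∈ H ∧ G ≤ τ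

/-- A pencilled hfd line set: every member lies in a pencil entirely contained in `H`. -/
def IsPencilledHfd {K : Type*} [Field K] (H : Set (Submodule K (Fin 6 → K))) : Prop :=
  IsHfd H ∧
    ∀ G ∈ H, ∃ v κ : Submodule K (Fin 6 → K), Module.finrank K v = 1 ∧
      Module.finrank K κ = 3 ∧ v ≤ κ ∧ pencil v κ ⊆ H ∧ G ∈ pencil v κ

/-- `v` is a vertex of the pencilled hfd line set `H`. -/
def IsVertex {K : Type*} [Field K] (H : Set (Submodule K (Fin 6 → K)))
    (v : Submodule K (Fin 6 → K)) : Prop :=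
  Module.finrank K v = 1 ∧ ∃ κ : Submodule K (Fin 6 → K),
    Module.finrank K κ = 3 ∧ v ≤ κ ∧ pencil v κ ⊆ H

/-- `κ` is a carrier plane of the pencilled hfd line set `H`. -/
def IsCarrier {K : Type*} [Field K] (H : Set (Submodule K (Fin 6 → K)))
    (κ : Submodule K (Fin 6 → K)) : Prop :=
  Module.finrank K κ = 3 ∧ ∃ v : Submodule K (Fin 6 → K),
    Module.finrank K v = 1 ∧ v ≤ κ ∧ pencil v κ ⊆ H

/-! In characteristic two the polar form `B` is alternating. For an alternating form, a
two-dimensional subspace containing a nonzero vector of its radical is totally isotropic; the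
point `q`, being orthogonal to all of `ε`, is such a vector for every line of `ε` through it.
Conversely, a totally isotropic line `G ≤ ε` missing `q` would give the totally isotropic
plane `ε = q ⊔ G`, whence `ε ⊓ π₅(ε) = ε` would not be a point. -/

namespace Submodule

variable {K V : Type*} [Field K] [AddCommGroup V] [Module K V]

open Module

theorem exists_eq_span_pair_of_finrank_eq_two {G : Submodule K V} (hG : finrank K G = 2)
    {x : V} (hx : x ∈ G) (hx0 : x ≠ 0) : ∃ y ∈ G, G = span K {x, y} := by
  have : FiniteDimensional K G := Module.finite_of_finrank_pos (by omega)
  have hx_lt : K ∙ x < G := by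
    refine lt_of_le_of_ne ((span_singleton_le_iff_mem x G).2 hx) fun h => ?_
    have := finrank_span_singleton (K := K) hx0
    rw [h] at this
    omega
  obtain ⟨y, hy, hyx⟩ := SetLike.exists_of_lt hx_lt
  have hle : span K {x, y} ≤ G := span_le.2 (Set.insert_subset hx (Set.singleton_subset_iff.2 hy))
  have hxy_lt : K ∙ x < span K {x, y} :=
    lt_of_le_of_ne (span_mono (Set.singleton_subset_iff.2 (Set.mem_insert x {y}))) fun h =>
      hyx (h ▸ subset_span (Set.mem_insert_of_mem x rfl))
  have : FiniteDimensional K (span K {x, y}) := Submodule.finiteDimensional_of_le hle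
  have := finrank_lt_finrank_of_lt hxy_lt
  rw [finrank_span_singleton hx0] at this
  exact ⟨y, hy, (eq_of_le_of_finrank_le hle (by omega)).symm⟩

theorem sup_eq_of_finrank_eq_succ {S T U : Submodule K V} [FiniteDimensional K U]
    (hST : ¬ S ≤ T) (hSU : S ≤ U) (hTU : T ≤ U) (hU : finrank K U = finrank K T + 1) :
    S ⊔ T = U := by
  have hlt : T < S ⊔ T := lt_of_le_of_ne le_sup_right fun h => hST (h ▸ le_sup_left)
  have : FiniteDimensional K ↥(S ⊔ T) := Submodule.finiteDimensional_of_le (sup_le hSU hTU)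
  have := finrank_lt_finrank_of_lt hlt
  exact eq_of_le_of_finrank_le (sup_le hSU hTU) (by omega)

end Submodule

namespace LinearMap.BilinForm

open Module Submodule

variable {K V : Type*} [Field K] [AddCommGroup V] [Module K V] {B : LinearMap.BilinForm K V}

theorem IsRefl.sup_le_orthogonal_sup (hB : B.IsRefl) {S T : Submodule K V}
    (hS : S ≤ B.orthogonal (S ⊔ T)) (hT : T ≤ B.orthogonal T) :
    S ⊔ T ≤ B.orthogonal (S ⊔ T) := by
  refine sup_le hS fun t ht n hn => ?_
  obtain ⟨s, hs, t', ht', rfl⟩ := mem_sup.1 hn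
  rw [map_add, LinearMap.add_apply, hB _ _ (hS hs t (mem_sup_right ht)), hT ht t' ht', add_zero]

theorem IsAlt.le_orthogonal_of_inf_orthogonal_ne_bot (hB : B.IsAlt) {G : Submodule K V}
    (hG : finrank K G = 2) (hrad : G ⊓ B.orthogonal G ≠ ⊥) : G ≤ B.orthogonal G := by
  obtain ⟨x, ⟨hxG, hxrad⟩, hx0⟩ := (Submodule.ne_bot_iff _).1 hrad
  obtain ⟨y, hyG, rfl⟩ := exists_eq_span_pair_of_finrank_eq_two hG hxG hx0
  have hyx : B y x = 0 := hxrad y hyG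
  have hxy : B x y = 0 := hB.isRefl _ _ hyx
  intro s hs t ht
  obtain ⟨a, b, rfl⟩ := mem_span_pair.1 hs
  obtain ⟨c, d, rfl⟩ := mem_span_pair.1 ht
  simp [hB.self_eq_zero, hxy, hyx]

variable {ε q G : Submodule K V}

theorem IsAlt.le_orthogonal_iff_le_of_inf_orthogonal_eq (hB : B.IsAlt)
    (hε : finrank K ε = 3) (hq : finrank K q = 1) (hqε : ε ⊓ B.orthogonal ε = q)
    (hG : finrank K G = 2) (hGε : G ≤ ε) : G ≤ B.orthogonal G ↔ q ≤ G := by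
  have hq_orth : q ≤ B.orthogonal ε := hqε ▸ inf_le_right
  refine ⟨fun hGG => by_contra fun hqG => ?_, fun hqG => ?_⟩
  · have : FiniteDimensional K ε := Module.finite_of_finrank_pos (by omega)
    have hsup : q ⊔ G = ε := sup_eq_of_finrank_eq_succ hqG (hqε ▸ inf_le_left) hGε (by omega)
    have hεε : ε ≤ B.orthogonal ε :=
      hsup ▸ hB.isRefl.sup_le_orthogonal_sup (hsup ▸ hq_orth) hGG
    rw [inf_eq_left.2 hεε] at hqε
    subst hqε
    omega
  · have hq0 : q ≠ ⊥ := fun h => by rw [h, finrank_bot] at hq; omega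
    exact hB.le_orthogonal_of_inf_orthogonal_ne_bot hG <|
      ne_bot_of_le_ne_bot hq0 (le_inf hqG (hq_orth.trans (B.orthogonal_le hGε)))

theorem IsAlt.inf_orthogonal_eq_bot_iff_not_le_of_inf_orthogonal_eq (hB : B.IsAlt)
    (hε : finrank K ε = 3) (hq : finrank K q = 1) (hqε : ε ⊓ B.orthogonal ε = q)
    (hG : finrank K G = 2) (hGε : G ≤ ε) : G ⊓ B.orthogonal G = ⊥ ↔ ¬ q ≤ G := by
  have hiff := hB.le_orthogonal_iff_le_of_inf_orthogonal_eq hε hq hqε hG hGε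
  have hq0 : q ≠ ⊥ := fun h => by rw [h, finrank_bot] at hq; omega
  refine ⟨fun hbot hqG => hq0 (le_bot_iff.1 (hbot ▸ le_inf hqG (hqG.trans (hiff.2 hqG)))),
    fun hqG => by_contra fun hrad =>
      hqG (hiff.1 (hB.le_orthogonal_of_inf_orthogonal_ne_bot hG hrad))⟩

end LinearMap.BilinForm

def kleinBilin (K : Type*) [Field K] : LinearMap.BilinForm K (Fin 6 → K) :=
  LinearMap.mk₂ K kleinB
    (fun _ _ _ => by simp only [kleinB, kleinQ, Pi.add_apply]; ring)
    (fun _ _ _ => by simp only [kleinB, kleinQ, Pi.add_apply, Pi.smul_apply, smul_eq_mul]; ring)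
    (fun _ _ _ => by simp only [kleinB, kleinQ, Pi.add_apply]; ring)
    (fun _ _ _ => by simp only [kleinB, kleinQ, Pi.add_apply, Pi.smul_apply, smul_eq_mul]; ring)

theorem kleinPolar_eq_orthogonal {K : Type*} [Field K] (S : Submodule K (Fin 6 → K)) :
    kleinPolar S = (kleinBilin K).orthogonal S :=
  rfl

theorem kleinBilin_isAlt {K : Type*} [Field K] [CharP K 2] : (kleinBilin K).IsAlt := fun x => by
  have h2 : (2 : K) = 0 := CharTwo.two_eq_zero
  change kleinB x x = 0
  simp only [kleinB, kleinQ, Pi.add_apply]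
  linear_combination (x 0 * x 1 + x 2 * x 3 + x 4 * x 5) * h2

theorem char_two_external_plane_pencil_general {K : Type*} [Field K] [CharP K 2]
    (ε : Submodule K (Fin 6 → K)) (hdim : Module.finrank K ε = 3)
    (q : Submodule K (Fin 6 → K)) (hq : Module.finrank K q = 1)
    (hqε : ε ⊓ kleinPolar ε = q) :
    ∀ G : Submodule K (Fin 6 → K), Module.finrank K G = 2 → G ≤ ε →
      ((G ≤ kleinPolar G ↔ q ≤ G) ∧
       ((G ⊓ kleinPolar G : Submodule K (Fin 6 → K)) = ⊥ ↔ ¬ q ≤ G)) := by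
  intro G hG hGε
  simp only [kleinPolar_eq_orthogonal] at hqε ⊢
  exact ⟨kleinBilin_isAlt.le_orthogonal_iff_le_of_inf_orthogonal_eq hdim hq hqε hG hGε,
    kleinBilin_isAlt.inf_orthogonal_eq_bot_iff_not_le_of_inf_orthogonal_eq hdim hq hqε hG hGε⟩

/-- In characteristic two, let `ε` be an external plane with `ε ∩ π₅(ε)` a point `q`.
A line `G ≤ ε` satisfies `G ≤ π₅(G)` iff `q ≤ G`, and `G ∩ π₅(G) = 0` iff
`q` is not contained in `G`. -/
theorem char_two_external_plane_pencil {K : Type*} [Field K] [CharP K 2]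
    (ε : Submodule K (Fin 6 → K)) (hdim : Module.finrank K ε = 3)
    (hext : IsExternal ε)
    (q : Submodule K (Fin 6 → K)) (hq : Module.finrank K q = 1)
    (hqε : ε ⊓ kleinPolar ε = q) :
    ∀ G : Submodule K (Fin 6 → K), Module.finrank K G = 2 → G ≤ ε →
      ((G ≤ kleinPolar G ↔ q ≤ G) ∧
       ((G ⊓ kleinPolar G : Submodule K (Fin 6 → K)) = ⊥ ↔ ¬ q ≤ G)) :=
  char_two_external_plane_pencil_general ε hdim q hq hqε
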